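/- In the directed cycle Z_m (m ≥ 3), the magnitude-homology differential d¹ sends the class λ_e^i = [(x,x⁺,...,x,x⁺)] ∈ MH_{2i+1, mi+1}(Z_m) (a tuple with 2i+2 entries, e the edge x→x⁺=y) to κ_y^i − κ_x^i, where κ_x^i = [(x,x⁺,...,x,x⁺,x)] ∈ MH_{2i, mi}(Z_m); equivalently, applying the reachability differential to the representative (x,x⁺,...,x,x⁺) and discarding terms of length < mi yields (x⁺,x,...,x,x⁺) − (x,x⁺,...,x⁺,x), which represents κ_y^i − κ_x^i. -/

import Mathlib

open scoped Classical

/-- A directed graph on a vertex type `V` (loops allowed, no parallel edges). -/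
structure DGraph (V : Type) where
  Adj : V → V → Prop

namespace DGraph
variable {V : Type}

/-- There is a directed path of length `n` (i.e. with `n` edges) from `x` to `y`. -/
def PathLen (G : DGraph V) (x y : V) (n : ℕ) : Prop :=
  ∃ f : ℕ → V, f 0 = x ∧ f n = y ∧ ∀ i < n, G.Adj (f i) (f (i + 1))

/-- The shortest path metric, with values in `ℕ∞ = ℕ ∪ {∞}`. -/
noncomputable def edist (G : DGraph V) (x y : V) : ℕ∞ :=
  sInf {n : ℕ∞ | ∃ m : ℕ, n = m ∧ G.PathLen x y m}

/-- The length of a tuple of vertices: the sum of consecutive distances. -/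
noncomputable def tlen (G : DGraph V) {k : ℕ} (f : Fin (k + 1) → V) : ℕ∞ :=
  ∑ i : Fin k, G.edist (f i.castSucc) (f i.succ)

/-- `y` is reachable from `x` by a directed path. -/
def Reaches (G : DGraph V) (x y : V) : Prop := Relation.ReflTransGen G.Adj x y

/-- The induced subgraph on a set of vertices. -/
def induce (G : DGraph V) (A : Set V) : DGraph A := ⟨fun a b => G.Adj a.1 b.1⟩

end DGraph

variable {V : Type}

/-- Validity of a tuple as a magnitude-chain basis element of degree `k` and length `ℓ`:
consecutive entries are distinct, at finite distance, and the total length is `ℓ`. -/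
def MCValid (G : DGraph V) (k ℓ : ℕ) (f : Fin (k + 1) → V) : Prop :=
  (∀ i : Fin k, G.edist (f i.castSucc) (f i.succ) ≠ 0 ∧ G.edist (f i.castSucc) (f i.succ) ≠ ⊤) ∧
    G.tlen f = (ℓ : ℕ∞)

/-- Basis of the magnitude chain group `MC_{k,ℓ}(G)`. -/
def MCb (G : DGraph V) (k ℓ : ℕ) : Type := {f : Fin (k + 1) → V // MCValid G k ℓ f}

/-- The magnitude chain group `MC_{k,ℓ}(G)` with coefficients in `R`. -/
abbrev MCMod (R : Type) [CommRing R] (G : DGraph V) (k ℓ : ℕ) := MCb G k ℓ →₀ R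

/-- Deletion of the interior entry in position `j+1` of a `(k+2)`-tuple. -/
def delMid {k : ℕ} (f : Fin (k + 2) → V) (j : Fin k) : Fin (k + 1) → V :=
  f ∘ (Fin.succAbove j.succ.castSucc)

/-- The magnitude-chain differential `MC_{k+1,ℓ}(G) → MC_{k,ℓ}(G)`: delete interior
entries with alternating signs, omitting any length-decreasing term. -/
noncomputable def dMC (R : Type) [CommRing R] (G : DGraph V) (k ℓ : ℕ) :
    MCMod R G (k + 1) ℓ →ₗ[R] MCMod R G k ℓ :=
  Finsupp.lsum R fun b => LinearMap.toSpanSingleton R _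
    (∑ j : Fin k, (-1 : R) ^ ((j : ℕ) + 1) •
      (if h : MCValid G k ℓ (delMid b.1 j) then
        Finsupp.single (⟨delMid b.1 j, h⟩ : MCb G k ℓ) (1 : R) else 0))

/-- The outgoing magnitude differential from degree `k` (zero in degree `0`). -/
noncomputable def dMCOut (R : Type) [CommRing R] (G : DGraph V) (ℓ : ℕ) :
    (k : ℕ) → MCMod R G k ℓ →ₗ[R] MCMod R G (k - 1) ℓ
  | 0 => 0
  | (k + 1) => dMC R G k ℓ

/-- Magnitude homology `MH_{k,ℓ}(G)` with coefficients in `R`. -/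
noncomputable abbrev MH (R : Type) [CommRing R] (G : DGraph V) (k ℓ : ℕ) :=
  letI : HasQuotient (LinearMap.ker (dMCOut R G ℓ k))
      (Submodule R (LinearMap.ker (dMCOut R G ℓ k))) := Submodule.hasQuotient (R := R) (M := (LinearMap.ker (dMCOut R G ℓ k)))
  LinearMap.ker (dMCOut R G ℓ k) ⧸
    (LinearMap.range (dMCOut R G ℓ (k + 1))).comap (LinearMap.ker (dMCOut R G ℓ k)).subtype

/-- Embedding of the magnitude chains into the free module on all tuples of vertices. -/
noncomputable def eMC (R : Type) [CommRing R] (G : DGraph V) (k ℓ : ℕ) :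
    MCMod R G k ℓ →ₗ[R] ((Fin (k + 1) → V) →₀ R) :=
  Finsupp.lmapDomain R R Subtype.val

/-- Basis of a subcomplex of the magnitude chains, cut out by a predicate `P` on tuples
(assumed closed under the interior deletions appearing in the differential). -/
def RCb (G : DGraph V) (P : ∀ k, (Fin (k + 1) → V) → Prop) (k ℓ : ℕ) : Type :=
  {f : Fin (k + 1) → V // MCValid G k ℓ f ∧ P k f}

/-- The degree-`k`, length-`ℓ` chain group of the subcomplex cut out by `P`. -/
abbrev RMod (R : Type) [CommRing R] (G : DGraph V) (P : ∀ k, (Fin (k + 1) → V) → Prop)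
    (k ℓ : ℕ) := RCb G P k ℓ →₀ R

/-- The differential of the subcomplex cut out by `P`. -/
noncomputable def dR (R : Type) [CommRing R] (G : DGraph V)
    (P : ∀ k, (Fin (k + 1) → V) → Prop) (k ℓ : ℕ) :
    RMod R G P (k + 1) ℓ →ₗ[R] RMod R G P k ℓ :=
  Finsupp.lsum R fun b => LinearMap.toSpanSingleton R _
    (∑ j : Fin k, (-1 : R) ^ ((j : ℕ) + 1) •
      (if h : MCValid G k ℓ (delMid b.1 j) ∧ P k (delMid b.1 j) then
        Finsupp.single (⟨delMid b.1 j, h⟩ : RCb G P k ℓ) (1 : R) else 0))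

/-- The outgoing differential of the subcomplex from degree `k` (zero in degree `0`). -/
noncomputable def dROut (R : Type) [CommRing R] (G : DGraph V)
    (P : ∀ k, (Fin (k + 1) → V) → Prop) (ℓ : ℕ) :
    (k : ℕ) → RMod R G P k ℓ →ₗ[R] RMod R G P (k - 1) ℓ
  | 0 => 0
  | (k + 1) => dR R G P k ℓ

/-- The degree-`k`, length-`ℓ` homology of the subcomplex cut out by `P`. -/
noncomputable abbrev RH (R : Type) [CommRing R] (G : DGraph V)
    (P : ∀ k, (Fin (k + 1) → V) → Prop) (k ℓ : ℕ) :=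
  letI : HasQuotient (LinearMap.ker (dROut R G P ℓ k))
      (Submodule R (LinearMap.ker (dROut R G P ℓ k))) := Submodule.hasQuotient (R := R) (M := (LinearMap.ker (dROut R G P ℓ k)))
  LinearMap.ker (dROut R G P ℓ k) ⧸
    (LinearMap.range (dROut R G P ℓ (k + 1))).comap (LinearMap.ker (dROut R G P ℓ k)).subtype

/-- Embedding of the subcomplex chains into the free module on all tuples of vertices. -/
noncomputable def eR (R : Type) [CommRing R] (G : DGraph V)
    (P : ∀ k, (Fin (k + 1) → V) → Prop) (k ℓ : ℕ) :
    RMod R G P k ℓ →ₗ[R] ((Fin (k + 1) → V) →₀ R) :=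
  Finsupp.lmapDomain R R Subtype.val

/-- `A ⊆ V`, with projection `π`, is a cofibration in `G`: an induced subgraph inclusion
with no edges from outside `A` into `A`, such that every vertex `x` in the reach of `A`
has a projection `π x ∈ A` with `d(a,x) = d(a,π x) + d(π x,x)` for all `a ∈ A`. -/
def IsCofib (G : DGraph V) (A : Set V) (π : V → V) : Prop :=
  (∀ u v : V, u ∉ A → v ∈ A → ¬ G.Adj u v) ∧
  (∀ x : V, (∃ a ∈ A, G.Reaches a x) →
    π x ∈ A ∧ ∀ a ∈ A, G.edist a x = G.edist a (π x) + G.edist (π x) x)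

/-- The predicate cutting out the subcomplex `A_{*,ℓ}(a,x)` of `MC_{*,ℓ}(X)`: tuples
starting at `a`, ending at `x`, with all intermediate entries in `A`. -/
def AP (A : Set V) (a x : V) : ∀ k, (Fin (k + 1) → V) → Prop :=
  fun k f => f 0 = a ∧ f (Fin.last k) = x ∧
    ∀ i : Fin (k + 1), i ≠ 0 → i ≠ Fin.last k → f i ∈ A

/-- The directed cycle `Z_m` on the vertex set `ZMod m`, with edges `x → x + 1`. -/
def Zc (m : ℕ) : DGraph (ZMod m) := ⟨fun x y => y = x + 1⟩

/-- The part of the reachability differential that lowers the length by exactly one: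
delete any entry (endpoints included) with alternating signs `(-1)^j`, keeping only
terms of length exactly `ℓ` (tuples with repeated consecutive entries are invalid and
hence discarded).  On magnitude homology this induces the differential `d¹` of the
magnitude-path spectral sequence. -/
noncomputable def dMC1 (R : Type) [CommRing R] {V : Type} (G : DGraph V) (k ℓ : ℕ) :
    MCMod R G (k + 1) (ℓ + 1) →ₗ[R] MCMod R G k ℓ :=
  Finsupp.lsum R fun b => LinearMap.toSpanSingleton R _
    (∑ j : Fin (k + 2), (-1 : R) ^ (j : ℕ) •
      (if h : MCValid G k ℓ (b.1 ∘ j.succAbove) then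
        Finsupp.single (⟨b.1 ∘ j.succAbove, h⟩ : MCb G k ℓ) (1 : R) else 0))

/-!
In `Z_m` the edge `x → x⁺` has length `1` and the way back `x⁺ → x` has length `m - 1`, so
tuples alternating along one edge are magnitude chains whose length grows by `m` per round
trip. Deleting an interior entry of such a tuple makes two consecutive entries equal, so in
`d¹` only the deletions of the two endpoints survive: the first gives `(x⁺, x, …, x⁺)` with
sign `+1`, the last gives `(x, x⁺, …, x)` with sign `(-1)^(2i+1) = -1`.
-/

namespace DGraph

variable (G : DGraph V)

lemma edist_eq_of_pathLen {x y : V} {n : ℕ} (h : G.PathLen x y n)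
    (hmin : ∀ k, G.PathLen x y k → n ≤ k) : G.edist x y = n :=
  le_antisymm (sInf_le ⟨n, rfl, h⟩) <|
    le_sInf fun _ ⟨k, hk, hp⟩ => hk ▸ Nat.cast_le.2 (hmin k hp)

lemma edist_self (x : V) : G.edist x x = 0 :=
  G.edist_eq_of_pathLen ⟨fun _ => x, rfl, rfl, fun _ h => absurd h (Nat.not_lt_zero _)⟩
    fun k _ => k.zero_le

end DGraph

lemma not_mcValid_of_apply_castSucc_eq {G : DGraph V} {k ℓ : ℕ} {f : Fin (k + 1) → V}
    (q : Fin k) (h : f q.castSucc = f q.succ) : ¬ MCValid G k ℓ f :=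
  fun hf => (hf.1 q).1 (h ▸ G.edist_self _)

lemma dMC1_single_of_not_mcValid_delMid (R : Type) [CommRing R] {G : DGraph V} {k ℓ : ℕ}
    (b : MCb G (k + 1) (ℓ + 1)) (b₀ bₗ : MCb G k ℓ)
    (h₀ : b.1 ∘ Fin.succAbove 0 = b₀.1) (hₗ : b.1 ∘ (Fin.last (k + 1)).succAbove = bₗ.1)
    (hmid : ∀ q : Fin k, ¬ MCValid G k ℓ (delMid b.1 q)) :
    dMC1 R G k ℓ (Finsupp.single b 1) =
      Finsupp.single b₀ 1 + (-1 : R) ^ (k + 1) • Finsupp.single bₗ 1 := by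
  rw [dMC1, Finsupp.lsum_single, LinearMap.toSpanSingleton_apply, one_smul]
  obtain ⟨f, _⟩ := b
  obtain ⟨f₀, hf₀⟩ := b₀
  obtain ⟨fₗ, hfₗ⟩ := bₗ
  dsimp only at h₀ hₗ hmid ⊢
  subst h₀ hₗ
  have hmid' : ∀ q : Fin k, ¬ MCValid G k ℓ (f ∘ q.castSucc.succ.succAbove) := by
    simpa only [delMid, Fin.succ_castSucc] using hmid
  -- `dMC1` builds its summands over the underlying subtype rather than `MCb`; restating the
  -- goal there makes the rewrites below type-correct.
  change (∑ j : Fin (k + 2), (-1 : R) ^ (j : ℕ) •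
      (if h : MCValid G k ℓ (f ∘ j.succAbove) then
        Finsupp.single (⟨f ∘ j.succAbove, h⟩ : {g // MCValid G k ℓ g}) 1 else 0) :
      {g // MCValid G k ℓ g} →₀ R) =
    Finsupp.single ⟨_, hf₀⟩ 1 + (-1 : R) ^ (k + 1) • Finsupp.single ⟨_, hfₗ⟩ 1
  rw [Fin.sum_univ_succ, Fin.sum_univ_castSucc, Fin.succ_last, dif_pos hf₀, dif_pos hfₗ]
  simp only [dif_neg (hmid' _), smul_zero, Finset.sum_const_zero, zero_add, Fin.val_zero,
    pow_zero, one_smul, Fin.val_last]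

def alternating (u v : V) (n : ℕ) : Fin n → V := fun t => if Even (t : ℕ) then u else v

lemma alternating_comp_succAbove_zero (u v : V) (n : ℕ) :
    alternating u v (n + 1) ∘ Fin.succAbove 0 = alternating v u n := by
  funext t
  by_cases h : Even (t : ℕ) <;> simp [alternating, h, Nat.even_add_one]

lemma alternating_comp_succAbove_last (u v : V) (n : ℕ) :
    alternating u v (n + 1) ∘ (Fin.last n).succAbove = alternating u v n := by
  funext t
  simp [alternating]

lemma delMid_alternating_apply_castSucc (u v : V) {k : ℕ} (q : Fin k) :
    delMid (alternating u v (k + 2)) q q.castSucc = delMid (alternating u v (k + 2)) q q.succ := by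
  have hlt : q.castSucc.castSucc < q.succ.castSucc :=
    Fin.castSucc_lt_castSucc_iff.2 q.castSucc_lt_succ
  rw [delMid, Function.comp_apply, Function.comp_apply,
    Fin.succAbove_of_castSucc_lt _ _ hlt, Fin.succAbove_of_le_castSucc _ _ le_rfl]
  simp [alternating, Nat.even_add_one]

lemma tlen_alternating (G : DGraph V) (u v : V) (k : ℕ) :
    G.tlen (alternating u v (k + 1)) =
      ∑ t ∈ Finset.range k, if Even t then G.edist u v else G.edist v u := by
  rw [DGraph.tlen, ← Fin.sum_univ_eq_sum_range]
  refine Finset.sum_congr rfl fun t _ => ?_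
  by_cases h : Even (t : ℕ) <;> simp [alternating, h, Nat.even_add_one]

lemma sum_range_two_mul_ite_even {M : Type} [AddCommMonoid M] (a b : M) (i : ℕ) :
    ∑ t ∈ Finset.range (2 * i), (if Even t then a else b) = i • (a + b) := by
  induction i with
  | zero => simp
  | succ i ih =>
    rw [Nat.mul_succ, Finset.sum_range_succ, Finset.sum_range_succ, ih,
      if_pos (even_two_mul i), if_neg (by simp), succ_nsmul, add_assoc]

section Alternating

variable {G : DGraph V} {u v : V} {n : ℕ}

lemma mcValid_alternating_two_mul (huv : G.edist u v ≠ 0 ∧ G.edist u v ≠ ⊤)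
    (hvu : G.edist v u ≠ 0 ∧ G.edist v u ≠ ⊤) (hround : G.edist u v + G.edist v u = n)
    (i : ℕ) : MCValid G (2 * i) (n * i) (alternating u v (2 * i + 1)) := by
  refine ⟨fun t => ?_, ?_⟩
  · by_cases h : Even (t : ℕ) <;> simp [alternating, h, Nat.even_add_one, huv, hvu]
  · rw [tlen_alternating, sum_range_two_mul_ite_even, hround, nsmul_eq_mul]
    push_cast
    ring

lemma mcValid_alternating_two_mul_add_one (huv : G.edist u v = 1)
    (hvu : G.edist v u ≠ 0 ∧ G.edist v u ≠ ⊤) (hround : G.edist u v + G.edist v u = n)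
    (i : ℕ) : MCValid G (2 * i + 1) (n * i + 1) (alternating u v (2 * i + 2)) := by
  refine ⟨fun t => ?_, ?_⟩
  · by_cases h : Even (t : ℕ) <;> simp [alternating, h, Nat.even_add_one, huv, hvu]
  · rw [tlen_alternating, Finset.sum_range_succ, sum_range_two_mul_ite_even, hround,
      if_pos (even_two_mul i), huv, nsmul_eq_mul]
    push_cast
    ring

end Alternating

lemma Zc_pathLen_iff {m : ℕ} {x y : ZMod m} {n : ℕ} : (Zc m).PathLen x y n ↔ y = x + n := by
  constructor
  · rintro ⟨f, rfl, rfl, hstep⟩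
    have key : ∀ j ≤ n, f j = f 0 + j := by
      intro j
      induction j with
      | zero => simp
      | succ j ih =>
        intro hj
        rw [show f (j + 1) = f j + 1 from hstep j hj, ih (by omega)]
        push_cast
        ring
    exact key n le_rfl
  · rintro rfl
    exact ⟨fun j => x + j, by simp, rfl, fun j _ => by simp [Zc, add_assoc]⟩

lemma Zc_edist_self_add_one {m : ℕ} [Nontrivial (ZMod m)] (x : ZMod m) :
    (Zc m).edist x (x + 1) = 1 := by
  refine (Zc m).edist_eq_of_pathLen (Zc_pathLen_iff.2 (by simp)) fun k hk => ?_
  rw [Nat.one_le_iff_ne_zero]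
  rintro rfl
  simp [Zc_pathLen_iff] at hk

lemma Zc_edist_add_one_self {m : ℕ} [NeZero m] (x : ZMod m) :
    (Zc m).edist (x + 1) x = (m - 1 : ℕ) := by
  have hm : 1 ≤ m := Nat.one_le_iff_ne_zero.2 (NeZero.ne m)
  refine (Zc m).edist_eq_of_pathLen (Zc_pathLen_iff.2 ?_) fun k hk => ?_
  · rw [Nat.cast_sub hm, ZMod.natCast_self]
    ring
  · have hdvd : ((k + 1 : ℕ) : ZMod m) = 0 := by
      rw [Zc_pathLen_iff] at hk
      push_cast
      linear_combination -hk
    have := Nat.le_of_dvd k.succ_pos ((ZMod.natCast_eq_zero_iff _ _).1 hdvd)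
    omega

lemma Zc_edist_add_edist_add_one {m : ℕ} [NeZero m] [Nontrivial (ZMod m)] (x : ZMod m) :
    (Zc m).edist x (x + 1) + (Zc m).edist (x + 1) x = m := by
  rw [Zc_edist_self_add_one, Zc_edist_add_one_self, ← Nat.cast_one, ← Nat.cast_add,
    Nat.add_sub_cancel' (Nat.one_le_iff_ne_zero.2 (NeZero.ne m))]

/-- in `Z_m` (`m ≥ 3`), applying the reachability differential to the
representative `(x,x⁺,...,x,x⁺)` of `λ_e^i ∈ MH_{2i+1,mi+1}(Z_m)` (with `2i+2`
entries, `x⁺ = x+1`) and discarding the terms of length `< mi` yields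
`(x⁺,x,...,x,x⁺) − (x,x⁺,...,x⁺,x)`, which represents `κ_y^i − κ_x^i` (where
`y = x⁺`); i.e. `d¹(λ_e^i) = κ_y^i − κ_x^i`. -/
theorem d1_lambda (R : Type) [CommRing R] (m : ℕ) (hm : 3 ≤ m) (i : ℕ) (x : ZMod m) :
    ∃ (b : MCb (Zc m) (2 * i + 1) (m * i + 1)) (b₁ b₂ : MCb (Zc m) (2 * i) (m * i)),
      -- `b` is the representative `(x, x⁺, ..., x, x⁺)` of `λ_e^i`:
      b.1 = (fun t : Fin (2 * i + 2) => if Even (t : ℕ) then x else x + 1) ∧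
      -- `b₁ = (y, y⁻, ..., y⁻, y)` represents `κ_y^i` and
      -- `b₂ = (x, x⁺, ..., x⁺, x)` represents `κ_x^i`:
      b₁.1 = (fun t : Fin (2 * i + 1) => if Even (t : ℕ) then x + 1 else x) ∧
      b₂.1 = (fun t : Fin (2 * i + 1) => if Even (t : ℕ) then x else x + 1) ∧
      dMC1 R (Zc m) (2 * i) (m * i) (Finsupp.single b 1) =
        Finsupp.single b₁ 1 - Finsupp.single b₂ 1 := by
  have : Fact (1 < m) := ⟨by omega⟩
  have hxy := Zc_edist_self_add_one x
  have hyx : (Zc m).edist (x + 1) x ≠ 0 ∧ (Zc m).edist (x + 1) x ≠ ⊤ := by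
    rw [Zc_edist_add_one_self]
    exact ⟨by exact_mod_cast (show m - 1 ≠ 0 by omega), ENat.natCast_ne_top _⟩
  have hround := Zc_edist_add_edist_add_one x
  let b : MCb (Zc m) (2 * i + 1) (m * i + 1) :=
    ⟨_, mcValid_alternating_two_mul_add_one hxy hyx hround i⟩
  let b₁ : MCb (Zc m) (2 * i) (m * i) :=
    ⟨_, mcValid_alternating_two_mul hyx (by simp [hxy]) (by rw [add_comm, hround]) i⟩
  let b₂ : MCb (Zc m) (2 * i) (m * i) :=
    ⟨_, mcValid_alternating_two_mul (by simp [hxy]) hyx hround i⟩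
  refine ⟨b, b₁, b₂, rfl, rfl, rfl, ?_⟩
  rw [dMC1_single_of_not_mcValid_delMid R b b₁ b₂ (alternating_comp_succAbove_zero _ _ _)
      (alternating_comp_succAbove_last _ _ _)
      fun q => not_mcValid_of_apply_castSucc_eq q (delMid_alternating_apply_castSucc _ _ q),
    (Odd.neg_one_pow ⟨i, rfl⟩ : (-1 : R) ^ (2 * i + 1) = -1), neg_one_smul, sub_eq_add_neg]
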